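/- Let B be a commutative ring, b ∈ B, and B̄ = B[z]/(z²−b). The B-algebra homomorphism ψ : B[u,v]/(u²−bv²) → B̄[t] defined by u ↦ zt, v ↦ t is injective, and its image is exactly the set of elements f ∈ B̄[t] whose constant term lies in B ⊆ B̄. -/

import Mathlib

/-- `B̄ = B[z]/(z² − b)`. -/
abbrev Bbar9 {B : Type*} [CommRing B] (b : B) :=
  AdjoinRoot (Polynomial.X ^ 2 - Polynomial.C b)

/-- The `B`-algebra map `ψ : B[u,v] → B̄[t]` with `u ↦ zt`, `v ↦ t`
(with `X 0 = u`, `X 1 = v`). -/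
noncomputable def psi9 {B : Type*} [CommRing B] (b : B) :
    MvPolynomial (Fin 2) B →ₐ[B] Polynomial (Bbar9 b) :=
  MvPolynomial.aeval
    ![Polynomial.C (AdjoinRoot.root (Polynomial.X ^ 2 - Polynomial.C b)) * Polynomial.X,
      Polynomial.X]

/-!
Modulo `u² − bv²` every polynomial reduces to `f(v) + u g(v)`, which `ψ` sends to
`f(t) + z t g(t)`. As `1, z` is a `B`-basis of `B̄`, the `n`-th coefficient of this is
`f_n + g_{n-1} z`, so it vanishes only when `f = g = 0`: this gives the kernel. For the image,
constants `a ∈ B` are hit by `ψ a`, and `t · (a + cz) tⁿ = ψ((av + cu) vⁿ)`, so all of `t · B̄[t]`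
is hit as well.
-/

open Polynomial

namespace Bbar9

variable {B : Type*} [CommRing B] (b : B)

theorem root_sq : AdjoinRoot.root (X ^ 2 - C b) ^ 2 = algebraMap B (Bbar9 b) b := by
  have := AdjoinRoot.eval₂_root (X ^ 2 - C b)
  rwa [eval₂_sub, eval₂_X_pow, eval₂_C, sub_eq_zero] at this

theorem exists_eq_add_mul_root (x : Bbar9 b) :
    ∃ a c : B, x = algebraMap B _ a + algebraMap B _ c * AdjoinRoot.root (X ^ 2 - C b) := by
  induction x using AdjoinRoot.induction_on with | ih p => ?_
  induction p using Polynomial.induction_on with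
  | C a => exact ⟨a, 0, by simp [AdjoinRoot.algebraMap_eq]⟩
  | add p q hp hq =>
    obtain ⟨a, c, hp⟩ := hp
    obtain ⟨a', c', hq⟩ := hq
    exact ⟨a + a', c + c', by rw [map_add, hp, hq, map_add, map_add]; ring⟩
  | monomial n a h =>
    obtain ⟨a', c', h⟩ := h
    refine ⟨c' * b, a', ?_⟩
    rw [pow_succ _ n, ← mul_assoc, map_mul, h, AdjoinRoot.mk_X, map_mul]
    linear_combination algebraMap B (Bbar9 b) c' * root_sq b

theorem eq_zero_of_add_mul_root_eq_zero {a c : B}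
    (h : algebraMap B _ a + algebraMap B _ c * AdjoinRoot.root (X ^ 2 - C b) = 0) :
    a = 0 ∧ c = 0 := by
  nontriviality B
  have hlin : C c * X + C a = 0 := by
    have hdeg : (C c * X + C a).degree < (X ^ 2 - C b).degree := by
      rw [degree_X_pow_sub_C two_pos]
      exact degree_linear_le.trans_lt (by decide)
    have hmk : AdjoinRoot.mk (X ^ 2 - C b) (C c * X + C a) = 0 := by
      simpa [add_comm, AdjoinRoot.algebraMap_eq] using h
    have hmonic := monic_X_pow_sub_C b two_ne_zero
    rw [← (modByMonic_eq_self_iff hmonic).2 hdeg, ← AdjoinRoot.modByMonicHom_mk hmonic, hmk,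
      map_zero]
  exact ⟨by simpa using congrArg (coeff · 0) hlin, by simpa using congrArg (coeff · 1) hlin⟩

end Bbar9

section psi9

variable {B : Type*} [CommRing B] (b : B)

@[simp] lemma psi9_X_zero : psi9 b (MvPolynomial.X 0) = C (AdjoinRoot.root _) * X := by
  simp [psi9]

@[simp] lemma psi9_X_one : psi9 b (MvPolynomial.X 1) = X := by
  simp [psi9]

@[simp] lemma psi9_C (a : B) : psi9 b (MvPolynomial.C a) = C (algebraMap B (Bbar9 b) a) := by
  simp [psi9, Polynomial.algebraMap_apply]

lemma psi9_aeval_X_one (f : B[X]) :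
    psi9 b (aeval (MvPolynomial.X 1) f) = f.map (algebraMap B (Bbar9 b)) := by
  rw [← aeval_algHom_apply, psi9_X_one, aeval_X_left_eq_map]

lemma psi9_relation :
    psi9 b (MvPolynomial.X 0 ^ 2 - MvPolynomial.C b * MvPolynomial.X 1 ^ 2) = 0 := by
  simp only [map_sub, map_mul, map_pow, psi9_X_zero, psi9_X_one, psi9_C, ← Bbar9.root_sq]
  ring

noncomputable def linearInU (f g : B[X]) : MvPolynomial (Fin 2) B :=
  aeval (MvPolynomial.X 1) f + MvPolynomial.X 0 * aeval (MvPolynomial.X 1) g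

lemma exists_dvd_sub_linearInU (p : MvPolynomial (Fin 2) B) :
    ∃ f g : B[X], MvPolynomial.X 0 ^ 2 - MvPolynomial.C b * MvPolynomial.X 1 ^ 2 ∣
      p - linearInU f g := by
  induction p using MvPolynomial.induction_on with
  | C a => exact ⟨C a, 0, by simp [linearInU]⟩
  | add p q hp hq =>
    obtain ⟨f, g, hp⟩ := hp
    obtain ⟨f', g', hq⟩ := hq
    refine ⟨f + f', g + g', ?_⟩
    convert dvd_add hp hq using 1
    simp only [linearInU, map_add]
    ring
  | mul_X p i hp =>
    obtain ⟨f, g, q, hq⟩ := hp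
    fin_cases i
    · refine ⟨C b * X ^ 2 * g, f, q * MvPolynomial.X 0 + aeval (MvPolynomial.X 1) g, ?_⟩
      simp only [Fin.zero_eta, linearInU, map_mul, map_pow, aeval_C, aeval_X,
        MvPolynomial.algebraMap_eq] at hq ⊢
      linear_combination MvPolynomial.X 0 * hq
    · refine ⟨f * X, g * X, q * MvPolynomial.X 1, ?_⟩
      simp only [Fin.mk_one, linearInU, map_mul, aeval_X] at hq ⊢
      linear_combination MvPolynomial.X 1 * hq

lemma coeff_psi9_linearInU (f g : B[X]) (n : ℕ) :
    (psi9 b (linearInU f g)).coeff n =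
      algebraMap B _ (f.coeff n) + algebraMap B _ ((X * g).coeff n) * AdjoinRoot.root _ := by
  simp only [linearInU, map_add, map_mul, psi9_aeval_X_one, psi9_X_zero, coeff_add, coeff_map,
    mul_assoc, coeff_C_mul, mul_comm (AdjoinRoot.root _)]
  rw [← map_X (algebraMap B (Bbar9 b)), ← Polynomial.map_mul, coeff_map]

lemma linearInU_eq_zero_of_psi9_eq_zero {f g : B[X]} (h : psi9 b (linearInU f g) = 0) :
    linearInU f g = 0 := by
  have hcoeff (n : ℕ) : f.coeff n = 0 ∧ (X * g).coeff n = 0 :=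
    Bbar9.eq_zero_of_add_mul_root_eq_zero b (by rw [← coeff_psi9_linearInU, h, coeff_zero])
  have hf : f = 0 := ext fun n ↦ (hcoeff n).1
  have hg : g = 0 := ext fun n ↦ by simpa using (hcoeff (n + 1)).2
  simp [linearInU, hf, hg]

theorem ker_psi9 :
    RingHom.ker (psi9 b) =
      Ideal.span {MvPolynomial.X 0 ^ 2 - MvPolynomial.C b * MvPolynomial.X 1 ^ 2} := by
  refine le_antisymm (fun p hp ↦ ?_) (Ideal.span_le.2 (by simpa using psi9_relation b))
  obtain ⟨f, g, q, hq⟩ := exists_dvd_sub_linearInU b p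
  have hfg : linearInU f g = 0 := linearInU_eq_zero_of_psi9_eq_zero b <| by
    simpa [RingHom.mem_ker.1 hp, psi9_relation] using congrArg (psi9 b) hq
  rw [Ideal.mem_span_singleton]
  exact ⟨q, by simpa [hfg] using hq⟩

lemma coeff_zero_psi9 (p : MvPolynomial (Fin 2) B) :
    (psi9 b p).coeff 0 = algebraMap B (Bbar9 b) (MvPolynomial.constantCoeff p) := by
  induction p using MvPolynomial.induction_on with
  | C a => simp
  | add p q hp hq => simp [hp, hq]
  | mul_X p i hp => fin_cases i <;> simp [mul_coeff_zero]

lemma X_mul_mem_range_psi9 (G : (Bbar9 b)[X]) : X * G ∈ (psi9 b).range := by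
  induction G using Polynomial.induction_on' with
  | add p q hp hq => exact mul_add X p q ▸ add_mem hp hq
  | monomial n x =>
    obtain ⟨a, c, rfl⟩ := Bbar9.exists_eq_add_mul_root b x
    refine ⟨(MvPolynomial.C a * MvPolynomial.X 1 + MvPolynomial.C c * MvPolynomial.X 0) *
      MvPolynomial.X 1 ^ n, ?_⟩
    simp [← C_mul_X_pow_eq_monomial]
    ring

theorem range_psi9 :
    Set.range (psi9 b) = {F : (Bbar9 b)[X] | F.coeff 0 ∈ Set.range (algebraMap B (Bbar9 b))} := by
  ext F
  constructor
  · rintro ⟨p, rfl⟩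
    exact ⟨_, (coeff_zero_psi9 b p).symm⟩
  · rintro ⟨a, ha⟩
    rw [← X_mul_divX_add F, ← ha]
    exact add_mem (X_mul_mem_range_psi9 b _) ⟨MvPolynomial.C a, psi9_C b a⟩

end psi9

theorem stmt_9 {B : Type*} [CommRing B] (b : B) :
    RingHom.ker (psi9 b) =
      Ideal.span {MvPolynomial.X 0 ^ 2 - MvPolynomial.C b * MvPolynomial.X 1 ^ 2} ∧
    Set.range (psi9 b) =
      {f : Polynomial (Bbar9 b) |
        f.coeff 0 ∈ Set.range (algebraMap B (Bbar9 b))} :=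
  ⟨ker_psi9 b, range_psi9 b⟩
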